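/- Let μ and ν be probability measures on a measurable space H, and let a: H → ℝ^d, b: H → ℝ^p, and M: H → ℝ^{d×p} be measurable functions satisfying the pointwise bounds ‖a(h)‖₂ ≤ A, ‖b(h)‖₂ ≤ B, and ‖M(h)‖_F ≤ D for all h. Then ‖(E_ν[M] + Cov_ν(a,b)) − (E_μ[M] + Cov_μ(a,b))‖_F ≤ (3AB + D) · √(2 · KL(ν‖μ)). (Applied with μ the true posterior p_θ(h|v), ν the variational posterior q_φ(h|v), a = ∇_v log p̃_θ(v,·), b = ∇_θ log p̃_θ(v,·), and M = ∂∇_v log p̃_θ(v,·)/∂θ, this bounds the bias of VaGES by the square root of the KL divergence between variational and true posterior up to a constant.) -/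

import Mathlib

open MeasureTheory
open scoped ENNReal Classical

/-- The Kullback–Leibler divergence `KL(ν‖μ) = ∫ log (dν/dμ) dν` when `ν ≪ μ` (and the
log-likelihood ratio is integrable), and `+∞` otherwise. -/
noncomputable def klDivM {Ω : Type*} [MeasurableSpace Ω] (ν μ : Measure Ω) : ℝ≥0∞ :=
  if ν ≪ μ ∧ Integrable (llr ν μ) ν then ENNReal.ofReal (∫ ω, llr ν μ ω ∂ν) else ⊤

/-- The outer product `a bᵀ` of two Euclidean vectors, viewed as an element of
`ℝ^{d×p}` equipped with the Euclidean (= Frobenius) norm. -/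
noncomputable def outer {d p : ℕ} (a : EuclideanSpace ℝ (Fin d))
    (b : EuclideanSpace ℝ (Fin p)) : EuclideanSpace ℝ (Fin d × Fin p) :=
  (WithLp.equiv 2 (Fin d × Fin p → ℝ)).symm fun ij => a ij.1 * b ij.2

/-- The cross-covariance matrix `Cov_μ(a,b) = E_μ[a bᵀ] − (E_μ a)(E_μ b)ᵀ ∈ ℝ^{d×p}`. -/
noncomputable def covM {H : Type*} [MeasurableSpace H] (μ : Measure H) {d p : ℕ}
    (a : H → EuclideanSpace ℝ (Fin d)) (b : H → EuclideanSpace ℝ (Fin p)) :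
    EuclideanSpace ℝ (Fin d × Fin p) :=
  (∫ h, outer (a h) (b h) ∂μ) - outer (∫ h, a h ∂μ) (∫ h, b h ∂μ)

/-! ### Auxiliary pointwise calculus lemmas -/

private lemma vages_log_add_inv_sub_one_nonneg {t : ℝ} (ht : 0 < t) :
    0 ≤ Real.log t + 1/t - 1 := by
  have h := Real.log_le_sub_one_of_pos (inv_pos.mpr ht)
  rw [Real.log_inv] at h
  have : 1/t = t⁻¹ := one_div t
  linarith

private lemma vages_k_deriv (t : ℝ) (ht : 0 < t) :
    HasDerivAt (fun t : ℝ => (t+1) * Real.log t - 2*(t-1))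
      (Real.log t + (t+1)/t - 2) t := by
  have h1 : HasDerivAt (fun t : ℝ => (t+1) * Real.log t)
      (1 * Real.log t + (t+1) * t⁻¹) t :=
    ((hasDerivAt_id t).add_const 1).mul (Real.hasDerivAt_log ht.ne')
  have h2 : HasDerivAt (fun t : ℝ => 2*(t-1)) 2 t := by
    simpa using ((hasDerivAt_id t).sub_const 1).const_mul 2
  have heq : Real.log t + (t+1)/t - 2 = (1 * Real.log t + (t+1) * t⁻¹) - 2 := by
    field_simp
  rw [heq]
  exact h1.sub h2

private lemma vages_k_sign {t : ℝ} (ht : 0 < t) :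
    (1 ≤ t → 0 ≤ (t+1) * Real.log t - 2*(t-1)) ∧
    (t ≤ 1 → (t+1) * Real.log t - 2*(t-1) ≤ 0) := by
  set k : ℝ → ℝ := fun t => (t+1) * Real.log t - 2*(t-1) with hk
  have hmono : MonotoneOn k (Set.Ioi (0:ℝ)) := by
    apply monotoneOn_of_deriv_nonneg (convex_Ioi 0)
    · exact fun x hx => ((vages_k_deriv x hx).differentiableAt).continuousAt.continuousWithinAt
    · intro x hx
      rw [interior_Ioi] at hx
      exact ((vages_k_deriv x hx).differentiableAt).differentiableWithinAt
    · intro x hx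
      rw [interior_Ioi] at hx
      rw [(vages_k_deriv x hx).deriv]
      have h0 := vages_log_add_inv_sub_one_nonneg hx
      have hxne : x ≠ 0 := hx.ne'
      have : (x+1)/x = 1 + 1/x := by field_simp
      rw [this]; linarith
  have hk1 : k 1 = 0 := by simp [hk]
  constructor
  · intro h1t
    have := hmono (by norm_num : (1:ℝ) ∈ Set.Ioi 0) (Set.mem_Ioi.mpr ht) h1t
    rw [hk1] at this; exact this
  · intro ht1
    have := hmono (Set.mem_Ioi.mpr ht) (by norm_num : (1:ℝ) ∈ Set.Ioi 0) ht1
    rw [hk1] at this; exact this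

private lemma vages_F_deriv (t : ℝ) (ht : 0 < t) :
    HasDerivAt (fun t : ℝ => 2*(t+2)*(t * Real.log t - t + 1) - 3*(t-1)^2)
      (4 * ((t+1) * Real.log t - 2*(t-1))) t := by
  have hlog : HasDerivAt (fun t : ℝ => t * Real.log t) (1 * Real.log t + t * t⁻¹) t :=
    (hasDerivAt_id t).mul (Real.hasDerivAt_log ht.ne')
  have h1 : HasDerivAt (fun t : ℝ => 2*(t+2)) 2 t := by
    simpa using ((hasDerivAt_id t).add_const 2).const_mul 2
  have h2 : HasDerivAt (fun t : ℝ => t * Real.log t - t + 1)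
      (1 * Real.log t + t * t⁻¹ - 1) t := by
    simpa using (hlog.sub (hasDerivAt_id t)).add_const 1
  have h3 : HasDerivAt (fun t : ℝ => 3*(t-1)^2) (3*(2*(t-1))) t := by
    have := (((hasDerivAt_id t).sub_const 1).pow 2).const_mul 3
    simpa using this
  refine ((h1.mul h2).sub h3).congr_deriv ?_
  rw [mul_inv_cancel₀ ht.ne']
  ring

/-- Key pointwise inequality: `3(t-1)^2 ≤ 2(t+2)(t log t - t + 1)` for `t ≥ 0`. -/
private lemma vages_key_ineq {t : ℝ} (ht : 0 ≤ t) :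
    3*(t-1)^2 ≤ 2*(t+2)*(t * Real.log t - t + 1) := by
  rcases eq_or_lt_of_le ht with rfl | htpos
  · norm_num
  set F : ℝ → ℝ := fun t => 2*(t+2)*(t * Real.log t - t + 1) - 3*(t-1)^2 with hF
  have hF1 : F 1 = 0 := by simp [hF]
  have hnonneg : 0 ≤ F t := by
    rcases le_or_gt 1 t with h1t | ht1
    · have hmono : MonotoneOn F (Set.Ici (1:ℝ)) := by
        apply monotoneOn_of_deriv_nonneg (convex_Ici 1)
        · intro x hx
          exact ((vages_F_deriv x
            (lt_of_lt_of_le one_pos hx)).differentiableAt).continuousAt.continuousWithinAt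
        · intro x hx
          rw [interior_Ici] at hx
          exact ((vages_F_deriv x (lt_trans one_pos hx)).differentiableAt).differentiableWithinAt
        · intro x hx
          rw [interior_Ici] at hx
          rw [(vages_F_deriv x (lt_trans one_pos hx)).deriv]
          have := (vages_k_sign (lt_trans one_pos hx)).1 hx.le
          linarith
      have := hmono (Set.self_mem_Ici) (Set.mem_Ici.mpr h1t) h1t
      rw [hF1] at this; exact this
    · have hanti : AntitoneOn F (Set.Ioc (0:ℝ) 1) := by
        apply antitoneOn_of_deriv_nonpos (convex_Ioc 0 1)
        · intro x hx
          exact ((vages_F_deriv x hx.1).differentiableAt).continuousAt.continuousWithinAt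
        · intro x hx
          rw [interior_Ioc] at hx
          exact ((vages_F_deriv x hx.1).differentiableAt).differentiableWithinAt
        · intro x hx
          rw [interior_Ioc] at hx
          rw [(vages_F_deriv x hx.1).deriv]
          have := (vages_k_sign hx.1).2 hx.2.le
          linarith
      have := hanti (Set.mem_Ioc.mpr ⟨htpos, ht1.le⟩)
        (Set.mem_Ioc.mpr ⟨one_pos, le_refl 1⟩) ht1.le
      rw [hF1] at this; exact this
  simpa [hF] using hnonneg

private lemma vages_phi_nonneg {t : ℝ} (ht : 0 ≤ t) : 0 ≤ t * Real.log t - t + 1 := by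
  nlinarith [vages_key_ineq ht, sq_nonneg (t-1)]

private lemma vages_pointwise_eps {t ε : ℝ} (ht : 0 ≤ t) (hε : 0 < ε) :
    |t - 1| ≤ ε/2 * (t+2) + (1/(3*ε)) * (t * Real.log t - t + 1) := by
  have hden : (0:ℝ) < 6*ε*(t+2) := by positivity
  rw [← sub_nonneg]
  have heq : ε/2 * (t+2) + (1/(3*ε)) * (t * Real.log t - t + 1) - |t-1|
      = (3*ε^2*(t+2)^2 + 2*(t+2)*(t * Real.log t - t + 1) - 6*ε*(t+2)*|t-1|)
        / (6*ε*(t+2)) := by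
    field_simp
    ring
  rw [heq]
  apply div_nonneg _ hden.le
  nlinarith [vages_key_ineq ht, sq_nonneg (ε*(t+2) - |t-1|), sq_abs (t-1)]

/-! ### Pinsker's inequality (L¹ form) -/

private lemma vages_pinsker {H : Type*} [MeasurableSpace H] (μ ν : Measure H)
    [IsProbabilityMeasure μ] [IsProbabilityMeasure ν]
    (hac : ν ≪ μ) (hint : Integrable (llr ν μ) ν) :
    0 ≤ ∫ h, llr ν μ h ∂ν ∧
    ∫ h, |(ν.rnDeriv μ h).toReal - 1| ∂μ ≤ Real.sqrt (2 * ∫ h, llr ν μ h ∂ν) := by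
  set g : H → ℝ := fun h => (ν.rnDeriv μ h).toReal with hg
  have hg_nonneg : ∀ h, 0 ≤ g h := fun h => ENNReal.toReal_nonneg
  have hg_int : Integrable g μ := Measure.integrable_toReal_rnDeriv
  have hg_one : ∫ h, g h ∂μ = 1 := by
    rw [hg, Measure.integral_toReal_rnDeriv hac]
    simp
  set KL := ∫ h, llr ν μ h ∂ν with hKL
  have hKL_eq : KL = ∫ h, g h * Real.log (g h) ∂μ := by
    rw [hKL, ← integral_rnDeriv_smul hac (f := llr ν μ)]
    rfl
  have hgl_int : Integrable (fun h => g h * Real.log (g h)) μ := by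
    have := (integrable_rnDeriv_smul_iff hac (f := llr ν μ)).mpr hint
    exact this
  have hφ_int : Integrable (fun h => g h * Real.log (g h) - g h + 1) μ :=
    (hgl_int.sub hg_int).add (integrable_const 1)
  have hφ_eq : ∫ h, (g h * Real.log (g h) - g h + 1) ∂μ = KL := by
    have e1 : ∫ h, (g h * Real.log (g h) - g h + 1) ∂μ
        = (∫ h, (g h * Real.log (g h) - g h) ∂μ) + ∫ _, (1:ℝ) ∂μ :=
      integral_add (hgl_int.sub hg_int) (integrable_const 1)
    have e2 : ∫ h, (g h * Real.log (g h) - g h) ∂μ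
        = (∫ h, g h * Real.log (g h) ∂μ) - ∫ h, g h ∂μ :=
      integral_sub hgl_int hg_int
    rw [e1, e2, hg_one, ← hKL_eq]
    simp
  have hKL_nonneg : 0 ≤ KL := by
    rw [← hφ_eq]
    exact integral_nonneg fun h => vages_phi_nonneg (hg_nonneg h)
  refine ⟨hKL_nonneg, ?_⟩
  have hδ_int : Integrable (fun h => |g h - 1|) μ := (hg_int.sub (integrable_const 1)).abs
  set δ := ∫ h, |g h - 1| ∂μ with hδ
  have hδ_nonneg : 0 ≤ δ := integral_nonneg fun h => abs_nonneg _
  have hε_bound : ∀ ε : ℝ, 0 < ε → δ ≤ 3*ε/2 + KL/(3*ε) := by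
    intro ε hε
    have hrhs_int : Integrable
        (fun h => ε/2 * (g h + 2) + (1/(3*ε)) * (g h * Real.log (g h) - g h + 1)) μ :=
      (((hg_int.add (integrable_const 2)).const_mul _).add (hφ_int.const_mul _))
    have h1 : δ ≤ ∫ h, (ε/2 * (g h + 2) + (1/(3*ε)) * (g h * Real.log (g h) - g h + 1)) ∂μ :=
      integral_mono hδ_int hrhs_int fun h => vages_pointwise_eps (hg_nonneg h) hε
    have h2 : ∫ h, (ε/2 * (g h + 2) + (1/(3*ε)) * (g h * Real.log (g h) - g h + 1)) ∂μ
        = 3*ε/2 + KL/(3*ε) := by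
      have e1 : ∫ h, (ε/2 * (g h + 2) + (1/(3*ε)) * (g h * Real.log (g h) - g h + 1)) ∂μ
          = (∫ h, ε/2 * (g h + 2) ∂μ) + ∫ h, (1/(3*ε)) * (g h * Real.log (g h) - g h + 1) ∂μ :=
        integral_add ((hg_int.add (integrable_const 2)).const_mul _) (hφ_int.const_mul _)
      have e2 : ∫ h, (g h + 2) ∂μ = (∫ h, g h ∂μ) + ∫ _, (2:ℝ) ∂μ :=
        integral_add hg_int (integrable_const 2)
      rw [e1, integral_const_mul, integral_const_mul, e2, hg_one, hφ_eq]
      simp only [integral_const, probReal_univ, ENNReal.toReal_one, smul_eq_mul, one_mul]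
      ring
    rw [h2] at h1
    exact h1
  rcases eq_or_lt_of_le hKL_nonneg with hKL0 | hKLpos
  · rw [← hKL0]
    simp only [mul_zero, Real.sqrt_zero]
    by_contra hcon
    push_neg at hcon
    have hb := hε_bound (δ/3) (by linarith)
    rw [← hKL0] at hb
    simp at hb
    linarith
  · set s := Real.sqrt (2*KL) with hs
    have hs_pos : 0 < s := Real.sqrt_pos.mpr (by linarith)
    have hs_sq : s^2 = 2*KL := Real.sq_sqrt (by linarith)
    have hb := hε_bound (s/3) (by linarith)
    have h3 : 3*(s/3)/2 = s/2 := by ring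
    have h4 : KL/(3*(s/3)) = s/2 := by
      rw [show 3*(s/3) = s by ring, div_eq_iff hs_pos.ne']
      nlinarith
    rw [h3, h4] at hb
    linarith

/-! ### Bounded integral difference -/

private lemma vages_integral_diff_norm_le {H : Type*} [MeasurableSpace H]
    (μ ν : Measure H) [IsProbabilityMeasure μ] [IsProbabilityMeasure ν] (hac : ν ≪ μ)
    {E : Type*} [NormedAddCommGroup E] [NormedSpace ℝ E] [MeasurableSpace E] [BorelSpace E]
    [SecondCountableTopology E]
    {f : H → E} (hf : Measurable f) {C : ℝ} (hC : ∀ h, ‖f h‖ ≤ C) :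
    ‖(∫ h, f h ∂ν) - ∫ h, f h ∂μ‖ ≤ C * ∫ h, |(ν.rnDeriv μ h).toReal - 1| ∂μ := by
  set g : H → ℝ := fun h => (ν.rnDeriv μ h).toReal with hg
  have hg_int : Integrable g μ := Measure.integrable_toReal_rnDeriv
  have hδ_int : Integrable (fun h => |g h - 1|) μ := (hg_int.sub (integrable_const 1)).abs
  have hfμ : Integrable f μ :=
    Integrable.mono' (integrable_const C) hf.aestronglyMeasurable (ae_of_all _ hC)
  have hfν : Integrable f ν :=
    Integrable.mono' (integrable_const C) hf.aestronglyMeasurable (ae_of_all _ hC)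
  have hgf_int : Integrable (fun h => g h • f h) μ :=
    (integrable_rnDeriv_smul_iff hac).mpr hfν
  have h1 : ∫ h, f h ∂ν = ∫ h, g h • f h ∂μ := (integral_rnDeriv_smul hac).symm
  have h2 : (∫ h, f h ∂ν) - ∫ h, f h ∂μ = ∫ h, (g h • f h - f h) ∂μ := by
    rw [h1, integral_sub hgf_int hfμ]
  rw [h2]
  calc ‖∫ h, (g h • f h - f h) ∂μ‖ ≤ ∫ h, ‖g h • f h - f h‖ ∂μ :=
        norm_integral_le_integral_norm _
    _ ≤ ∫ h, |g h - 1| * C ∂μ := by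
        apply integral_mono (hgf_int.sub hfμ).norm (hδ_int.mul_const C)
        intro h
        show ‖g h • f h - f h‖ ≤ |g h - 1| * C
        have he : g h • f h - f h = (g h - 1) • f h := by rw [sub_smul, one_smul]
        rw [he, norm_smul, Real.norm_eq_abs]
        exact mul_le_mul_of_nonneg_left (hC h) (abs_nonneg _)
    _ = C * ∫ h, |g h - 1| ∂μ := by rw [integral_mul_const]; ring

/-! ### Properties of `outer` -/

private lemma outer_apply {d p : ℕ} (a : EuclideanSpace ℝ (Fin d)) (b : EuclideanSpace ℝ (Fin p))
    (ij : Fin d × Fin p) : outer a b ij = a ij.1 * b ij.2 := rfl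

private lemma outer_sub_left {d p : ℕ} (x y : EuclideanSpace ℝ (Fin d))
    (b : EuclideanSpace ℝ (Fin p)) :
    outer (x - y) b = outer x b - outer y b := by
  ext ij
  show (x ij.1 - y ij.1) * b ij.2 = x ij.1 * b ij.2 - y ij.1 * b ij.2
  ring

private lemma outer_sub_right {d p : ℕ} (x : EuclideanSpace ℝ (Fin d))
    (u v : EuclideanSpace ℝ (Fin p)) :
    outer x (u - v) = outer x u - outer x v := by
  ext ij
  show x ij.1 * (u ij.2 - v ij.2) = x ij.1 * u ij.2 - x ij.1 * v ij.2
  ring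

private lemma norm_outer {d p : ℕ} (a : EuclideanSpace ℝ (Fin d))
    (b : EuclideanSpace ℝ (Fin p)) :
    ‖outer a b‖ = ‖a‖ * ‖b‖ := by
  rw [EuclideanSpace.norm_eq, EuclideanSpace.norm_eq, EuclideanSpace.norm_eq,
    ← Real.sqrt_mul (by positivity)]
  congr 1
  rw [Fintype.sum_prod_type, Finset.sum_mul_sum]
  refine Finset.sum_congr rfl fun i _ => Finset.sum_congr rfl fun j _ => ?_
  simp [outer_apply, Real.norm_eq_abs, sq_abs, mul_pow]

private lemma measurable_outer_comp {H : Type*} [MeasurableSpace H] {d p : ℕ}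
    {a : H → EuclideanSpace ℝ (Fin d)} {b : H → EuclideanSpace ℝ (Fin p)}
    (ha : Measurable a) (hb : Measurable b) :
    Measurable (fun h => outer (a h) (b h)) := by
  refine (WithLp.measurable_toLp 2 _).comp (measurable_pi_lambda _ ?_)
  intro ij
  exact (((measurable_pi_apply ij.1).comp (WithLp.measurable_ofLp 2 _)).comp ha).mul
    (((measurable_pi_apply ij.2).comp (WithLp.measurable_ofLp 2 _)).comp hb)

private lemma outer_zero_left {d p : ℕ} (b : EuclideanSpace ℝ (Fin p)) :
    outer (0 : EuclideanSpace ℝ (Fin d)) b = 0 := by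
  ext ij
  show (0:ℝ) * b ij.2 = 0
  ring

private lemma outer_zero_right {d p : ℕ} (a : EuclideanSpace ℝ (Fin d)) :
    outer a (0 : EuclideanSpace ℝ (Fin p)) = 0 := by
  ext ij
  show a ij.1 * (0:ℝ) = 0
  ring

/-! ### Main theorem -/

/-- **Bias of VaGES, KL version.** For probability measures `μ, ν` on `H` and bounded
measurable `a : H → ℝ^d`, `b : H → ℝ^p`, `M : H → ℝ^{d×p}` with `‖a‖₂ ≤ A`, `‖b‖₂ ≤ B`,
`‖M‖_F ≤ D`, the combination of expectation and covariance terms satisfies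
`‖(E_ν[M] + Cov_ν(a,b)) − (E_μ[M] + Cov_μ(a,b))‖_F ≤ (3AB + D) · √(2 · KL(ν‖μ))`. -/
theorem vages_bias_le_sqrt_kl {d p : ℕ} {H : Type*} [MeasurableSpace H]
    (μ ν : Measure H) [IsProbabilityMeasure μ] [IsProbabilityMeasure ν]
    (a : H → EuclideanSpace ℝ (Fin d)) (b : H → EuclideanSpace ℝ (Fin p))
    (M : H → EuclideanSpace ℝ (Fin d × Fin p))
    (ha : Measurable a) (hb : Measurable b) (hM : Measurable M)
    (A B D : ℝ)
    (hA : ∀ h, ‖a h‖ ≤ A) (hB : ∀ h, ‖b h‖ ≤ B) (hD : ∀ h, ‖M h‖ ≤ D) :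
    (‖((∫ h, M h ∂ν) + covM ν a b) - ((∫ h, M h ∂μ) + covM μ a b)‖₊ : ℝ≥0∞)
      ≤ ENNReal.ofReal (3 * A * B + D) * (2 * klDivM ν μ) ^ (2⁻¹ : ℝ) := by
  -- H is nonempty, hence A, B, D are nonnegative
  have hne : Nonempty H := by
    by_contra hE
    rw [not_nonempty_iff] at hE
    have h1 : μ Set.univ = 1 := measure_univ
    rw [Set.univ_eq_empty_iff.mpr hE, measure_empty] at h1
    exact zero_ne_one h1
  obtain ⟨h₀⟩ := hne
  have hA0 : 0 ≤ A := le_trans (norm_nonneg _) (hA h₀)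
  have hB0 : 0 ≤ B := le_trans (norm_nonneg _) (hB h₀)
  have hD0 : 0 ≤ D := le_trans (norm_nonneg _) (hD h₀)
  by_cases hC0 : 3*A*B + D ≤ 0
  -- degenerate case: A*B = 0 and D = 0, LHS = 0
  · have hAB : A * B = 0 := le_antisymm (by nlinarith) (by positivity)
    have hDz : D = 0 := le_antisymm (by nlinarith) hD0
    have hMz : ∀ h, M h = 0 := fun h =>
      norm_le_zero_iff.mp (le_trans (hD h) hDz.le)
    have hMfun : M = fun _ => 0 := funext hMz
    have hcov : ∀ (κ : Measure H), covM κ a b = 0 := by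
      intro κ
      rcases mul_eq_zero.mp hAB with hz | hz
      · have haz : ∀ h, a h = 0 := fun h => norm_le_zero_iff.mp (le_trans (hA h) hz.le)
        have h1 : (fun h => outer (a h) (b h)) = fun _ => (0 : EuclideanSpace ℝ (Fin d × Fin p)) :=
          funext fun h => by rw [haz h, outer_zero_left]
        have h2 : (∫ h, a h ∂κ) = 0 := by rw [funext haz]; simp
        rw [covM, h1, h2, outer_zero_left]
        simp
      · have hbz : ∀ h, b h = 0 := fun h => norm_le_zero_iff.mp (le_trans (hB h) hz.le)
        have h1 : (fun h => outer (a h) (b h)) = fun _ => (0 : EuclideanSpace ℝ (Fin d × Fin p)) :=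
          funext fun h => by rw [hbz h, outer_zero_right]
        have h2 : (∫ h, b h ∂κ) = 0 := by rw [funext hbz]; simp
        rw [covM, h1, h2, outer_zero_right]
        simp
    have hzero : ((∫ h, M h ∂ν) + covM ν a b) - ((∫ h, M h ∂μ) + covM μ a b) = 0 := by
      rw [hMfun, hcov ν, hcov μ]
      simp
    rw [hzero]
    simp
  · push_neg at hC0
    by_cases hkl : ν ≪ μ ∧ Integrable (llr ν μ) ν
    · obtain ⟨hac, hint⟩ := hkl
      obtain ⟨hKL_nonneg, hpinsker⟩ := vages_pinsker μ ν hac hint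
      set KL := ∫ h, llr ν μ h ∂ν with hKL
      set δ := ∫ h, |(ν.rnDeriv μ h).toReal - 1| ∂μ with hδ
      have hδ_nonneg : 0 ≤ δ := integral_nonneg fun h => abs_nonneg _
      -- bounds on the three pieces
      have hMdiff : ‖(∫ h, M h ∂ν) - ∫ h, M h ∂μ‖ ≤ D * δ :=
        vages_integral_diff_norm_le μ ν hac hM hD
      have houter_bound : ∀ h, ‖outer (a h) (b h)‖ ≤ A * B := fun h => by
        rw [norm_outer]
        exact mul_le_mul (hA h) (hB h) (norm_nonneg _) hA0
      have houterdiff :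
          ‖(∫ h, outer (a h) (b h) ∂ν) - ∫ h, outer (a h) (b h) ∂μ‖ ≤ (A*B) * δ :=
        vages_integral_diff_norm_le μ ν hac (measurable_outer_comp ha hb) houter_bound
      have hadiff : ‖(∫ h, a h ∂ν) - ∫ h, a h ∂μ‖ ≤ A * δ :=
        vages_integral_diff_norm_le μ ν hac ha hA
      have hbdiff : ‖(∫ h, b h ∂ν) - ∫ h, b h ∂μ‖ ≤ B * δ :=
        vages_integral_diff_norm_le μ ν hac hb hB
      have hmbν : ‖∫ h, b h ∂ν‖ ≤ B := by
        refine le_trans (norm_integral_le_of_norm_le (integrable_const B) (ae_of_all _ hB)) ?_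
        simp
      have hmaμ : ‖∫ h, a h ∂μ‖ ≤ A := by
        refine le_trans (norm_integral_le_of_norm_le (integrable_const A) (ae_of_all _ hA)) ?_
        simp
      have hcovmean : ‖outer (∫ h, a h ∂ν) (∫ h, b h ∂ν)
            - outer (∫ h, a h ∂μ) (∫ h, b h ∂μ)‖ ≤ 2*A*B*δ := by
        have hsplit : outer (∫ h, a h ∂ν) (∫ h, b h ∂ν)
              - outer (∫ h, a h ∂μ) (∫ h, b h ∂μ)
            = outer ((∫ h, a h ∂ν) - ∫ h, a h ∂μ) (∫ h, b h ∂ν)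
              + outer (∫ h, a h ∂μ) ((∫ h, b h ∂ν) - ∫ h, b h ∂μ) := by
          rw [outer_sub_left, outer_sub_right]
          abel
        rw [hsplit]
        refine le_trans (norm_add_le _ _) ?_
        rw [norm_outer, norm_outer]
        have e1 : ‖(∫ h, a h ∂ν) - ∫ h, a h ∂μ‖ * ‖∫ h, b h ∂ν‖ ≤ (A*δ) * B :=
          mul_le_mul hadiff hmbν (norm_nonneg _) (by positivity)
        have e2 : ‖∫ h, a h ∂μ‖ * ‖(∫ h, b h ∂ν) - ∫ h, b h ∂μ‖ ≤ A * (B*δ) :=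
          mul_le_mul hmaμ hbdiff (norm_nonneg _) hA0
        nlinarith
      -- assemble
      have hreal : ‖((∫ h, M h ∂ν) + covM ν a b) - ((∫ h, M h ∂μ) + covM μ a b)‖
          ≤ (3*A*B + D) * δ := by
        have hX : ((∫ h, M h ∂ν) + covM ν a b) - ((∫ h, M h ∂μ) + covM μ a b)
            = ((∫ h, M h ∂ν) - ∫ h, M h ∂μ)
              + ((∫ h, outer (a h) (b h) ∂ν) - ∫ h, outer (a h) (b h) ∂μ)
              - (outer (∫ h, a h ∂ν) (∫ h, b h ∂ν)
                - outer (∫ h, a h ∂μ) (∫ h, b h ∂μ)) := by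
          simp only [covM]
          abel
        rw [hX]
        refine le_trans (norm_sub_le _ _) ?_
        refine le_trans (add_le_add (norm_add_le _ _) (le_refl _)) ?_
        have := add_le_add (add_le_add hMdiff houterdiff) hcovmean
        nlinarith
      have hreal2 : ‖((∫ h, M h ∂ν) + covM ν a b) - ((∫ h, M h ∂μ) + covM μ a b)‖
          ≤ (3*A*B + D) * Real.sqrt (2 * KL) :=
        le_trans hreal (mul_le_mul_of_nonneg_left hpinsker hC0.le)
      -- convert to ℝ≥0∞
      have hklval : klDivM ν μ = ENNReal.ofReal KL := by
        rw [klDivM, if_pos ⟨hac, hint⟩]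
      rw [hklval]
      have e1 : (2:ℝ≥0∞) * ENNReal.ofReal KL = ENNReal.ofReal (2 * KL) := by
        rw [ENNReal.ofReal_mul (by norm_num : (0:ℝ) ≤ 2), ENNReal.ofReal_ofNat]
      rw [e1, ENNReal.ofReal_rpow_of_nonneg (by linarith : (0:ℝ) ≤ 2*KL)
        (by norm_num : (0:ℝ) ≤ (2⁻¹:ℝ))]
      rw [show ((2:ℝ) * KL) ^ (2⁻¹:ℝ) = Real.sqrt (2*KL) by
        rw [Real.sqrt_eq_rpow]; norm_num]
      rw [← ENNReal.ofReal_mul (by linarith)]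
      rw [← ENNReal.ofReal_coe_nnreal, coe_nnnorm]
      exact ENNReal.ofReal_le_ofReal hreal2
    · have hklval : klDivM ν μ = ⊤ := by rw [klDivM, if_neg hkl]
      rw [hklval]
      have h2 : (2:ℝ≥0∞) * ⊤ = ⊤ := by simp
      rw [h2, ENNReal.top_rpow_of_pos (by norm_num)]
      rw [ENNReal.mul_top (by simp [ENNReal.ofReal_eq_zero]; linarith)]
      exact le_top
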